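/- Let λ ∈ ℝ, set μ_j := −j⁴π⁴ + λ j²π², and let a ∈ ℝ with a ∉ 𝒩₁. Then there exists a constant C > 0 such that for every positive integer j one has ∑_{k≥1, k≠j} 1 / |a + μ_k − μ_j| ≤ C (1 + log j) / j³. -/

import Mathlib

/-!
Write `μ_k - μ_j = -π² (k² - j²) (π² (k² + j²) - λ)`. Once `k² + j²` is large compared with `|λ|`
and `|a|`, this gives `|a + μ_k - μ_j| ≥ (π⁴/4) |k⁴ - j⁴|`; on the finitely many remaining pairs
the quotient `|a + μ_k - μ_j| / |k⁴ - j⁴|` is positive because `a ∉ 𝒩₁`. Hence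
`|a + μ_k - μ_j| ≥ c |k⁴ - j⁴|` for all `k ≠ j`, and it remains to bound `∑_{k ≠ j} 1/|k⁴ - j⁴|`:
for `k ≤ 2j` we have `|k⁴ - j⁴| ≥ |k - j| j³`, which contributes at most `2 H_j / j³`, and for
`k > 2j` we have `k⁴ - j⁴ ≥ 2 j² k²`, which contributes at most `1 / j³`.
-/

open Real Finset

theorem sum_inv_le_one_add_log {ι : Type*} {s : Finset ι} {φ : ι → ℕ} {n : ℕ}
    (hinj : Set.InjOn φ s) (hφ : ∀ i ∈ s, φ i ∈ Icc 1 n) :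
    ∑ i ∈ s, ((φ i : ℝ))⁻¹ ≤ 1 + log n :=
  calc ∑ i ∈ s, ((φ i : ℝ))⁻¹ = ∑ d ∈ s.image φ, ((d : ℝ))⁻¹ :=
        (sum_image (f := fun d : ℕ => ((d : ℝ))⁻¹) hinj).symm
    _ ≤ ∑ d ∈ Icc 1 n, ((d : ℝ))⁻¹ :=
      sum_le_sum_of_subset_of_nonneg (image_subset_iff.2 hφ) fun _ _ _ => by positivity
    _ = harmonic n := by simp [harmonic_eq_sum_Icc]
    _ ≤ 1 + log n := harmonic_le_one_add_log n

theorem sum_inv_abs_sub_le (j : ℕ) {s : Finset ℕ} (hs : ∀ k ∈ s, k ≠ j ∧ k ≤ 2 * j) :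
    ∑ k ∈ s, |(k : ℝ) - j|⁻¹ ≤ 2 * (1 + log j) := by
  have hcast (k : ℕ) : |(k : ℝ) - j| = (((k : ℤ) - j).natAbs : ℝ) := by
    push_cast [Nat.cast_natAbs]; rfl
  simp_rw [hcast]
  rw [← sum_filter_add_sum_filter_not s (· < j), two_mul]
  gcongr <;> refine sum_inv_le_one_add_log (fun x hx y hy h => ?_) fun k hk => ?_
  all_goals
    first
    | rw [mem_coe, mem_filter] at hx hy; omega
    | have := hs k (mem_filter.1 hk).1; rw [mem_filter] at hk; rw [mem_Icc]; omega

theorem sum_inv_sq_le_of_lt (m : ℕ) {s : Finset ℕ} (hs : ∀ k ∈ s, m < k) :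
    ∑ k ∈ s, ((k : ℝ) ^ 2)⁻¹ ≤ 2 / (m + 1) := by
  obtain ⟨M, hM⟩ := s.exists_nat_subset_range
  refine le_trans ?_ (sum_Ioo_inv_sq_le m M)
  refine sum_le_sum_of_subset_of_nonneg (fun k hk => ?_) fun _ _ _ => by positivity
  exact mem_Ioo.2 ⟨hs k hk, mem_range.1 (hM hk)⟩

theorem abs_sub_mul_pow_three_le {x y : ℝ} (hx : 0 ≤ x) (hy : 0 ≤ y) :
    |x - y| * y ^ 3 ≤ |x ^ 4 - y ^ 4| := by
  rw [show x ^ 4 - y ^ 4 = (x - y) * ((x + y) * (x ^ 2 + y ^ 2)) by ring, abs_mul,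
    abs_of_nonneg (by positivity : 0 ≤ (x + y) * (x ^ 2 + y ^ 2))]
  gcongr
  nlinarith [mul_nonneg hx hy, mul_nonneg (mul_nonneg hx hy) hx, pow_nonneg hx 3]

theorem two_mul_sq_mul_sq_le {x y : ℝ} (hy : 0 ≤ y) (hxy : 2 * y ≤ x) :
    2 * y ^ 2 * x ^ 2 ≤ x ^ 4 - y ^ 4 := by
  have : 4 * y ^ 2 ≤ x ^ 2 := by nlinarith
  nlinarith [sq_nonneg y, sq_nonneg x]

theorem sum_one_div_abs_pow_four_sub_le {j : ℕ} (hj : 0 < j) {t : Finset ℕ} (ht : j ∉ t) :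
    ∑ k ∈ t, 1 / |(k : ℝ) ^ 4 - j ^ 4| ≤ 3 * (1 + log j) / j ^ 3 := by
  have hJ : (1 : ℝ) ≤ j := by exact_mod_cast hj
  have hlog : 0 ≤ log j := log_nonneg hJ
  have near : ∑ k ∈ t with k ≤ 2 * j, 1 / |(k : ℝ) ^ 4 - j ^ 4| ≤ 2 * (1 + log j) / j ^ 3 :=
    calc ∑ k ∈ t with k ≤ 2 * j, 1 / |(k : ℝ) ^ 4 - j ^ 4|
        ≤ ∑ k ∈ t with k ≤ 2 * j, (j ^ 3 : ℝ)⁻¹ * |(k : ℝ) - j|⁻¹ := by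
          refine sum_le_sum fun k hk => ?_
          have hkj : (k : ℝ) ≠ j := fun h => ht (Nat.cast_injective h ▸ (mem_filter.1 hk).1)
          have : 0 < |(k : ℝ) - j| := abs_pos.2 (sub_ne_zero.2 hkj)
          rw [one_div, ← mul_inv, mul_comm]
          exact inv_anti₀ (by positivity) (abs_sub_mul_pow_three_le (by positivity) (by positivity))
      _ = (j ^ 3 : ℝ)⁻¹ * ∑ k ∈ t with k ≤ 2 * j, |(k : ℝ) - j|⁻¹ := (mul_sum ..).symm
      _ ≤ (j ^ 3 : ℝ)⁻¹ * (2 * (1 + log j)) := by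
          gcongr
          refine sum_inv_abs_sub_le j fun k hk => ⟨?_, (mem_filter.1 hk).2⟩
          rintro rfl; exact ht (mem_filter.1 hk).1
      _ = 2 * (1 + log j) / j ^ 3 := by ring
  have far : ∑ k ∈ t with ¬k ≤ 2 * j, 1 / |(k : ℝ) ^ 4 - j ^ 4| ≤ (1 + log j) / j ^ 3 :=
    calc ∑ k ∈ t with ¬k ≤ 2 * j, 1 / |(k : ℝ) ^ 4 - j ^ 4|
        ≤ ∑ k ∈ t with ¬k ≤ 2 * j, (2 * j ^ 2 : ℝ)⁻¹ * ((k : ℝ) ^ 2)⁻¹ := by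
          refine sum_le_sum fun k hk => ?_
          have hk : (2 * j : ℝ) ≤ k := by exact_mod_cast (not_le.1 (mem_filter.1 hk).2).le
          have := two_mul_sq_mul_sq_le (by positivity) hk
          rw [one_div, ← mul_inv, abs_of_nonneg (by nlinarith [sq_nonneg (j : ℝ)])]
          exact inv_anti₀ (mul_pos (by positivity) (by nlinarith)) (by linarith)
      _ = (2 * j ^ 2 : ℝ)⁻¹ * ∑ k ∈ t with ¬k ≤ 2 * j, ((k : ℝ) ^ 2)⁻¹ := (mul_sum ..).symm
      _ ≤ (2 * j ^ 2 : ℝ)⁻¹ * (2 / ((2 * j : ℕ) + 1)) := by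
          gcongr
          exact sum_inv_sq_le_of_lt _ fun k hk => not_le.1 (mem_filter.1 hk).2
      _ = (j ^ 2 * (2 * j + 1) : ℝ)⁻¹ := by push_cast; field_simp
      _ ≤ (j ^ 3 : ℝ)⁻¹ := inv_anti₀ (by positivity) (by nlinarith)
      _ ≤ (1 + log j) / j ^ 3 := by rw [inv_eq_one_div]; gcongr; linarith
  calc ∑ k ∈ t, 1 / |(k : ℝ) ^ 4 - j ^ 4|
      = ∑ k ∈ t with k ≤ 2 * j, 1 / |(k : ℝ) ^ 4 - j ^ 4|
        + ∑ k ∈ t with ¬k ≤ 2 * j, 1 / |(k : ℝ) ^ 4 - j ^ 4| :=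
        (sum_filter_add_sum_filter_not ..).symm
    _ ≤ 2 * (1 + log j) / j ^ 3 + (1 + log j) / j ^ 3 := add_le_add near far
    _ = 3 * (1 + log j) / j ^ 3 := by ring

theorem sum_one_div_abs_pow_four_sub_le_of_pnat (j : ℕ+) (u : Finset {k : ℕ+ // k ≠ j}) :
    ∑ k ∈ u, 1 / |((k.1 : ℕ) : ℝ) ^ 4 - (j : ℝ) ^ 4| ≤ 3 * (1 + log j) / j ^ 3 := by
  let toNat : {k : ℕ+ // k ≠ j} ↪ ℕ :=
    ⟨fun k => k.1, fun _ _ h => Subtype.ext (PNat.coe_injective h)⟩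
  refine (sum_map u toNat fun k => 1 / |(k : ℝ) ^ 4 - (j : ℝ) ^ 4|).symm.trans_le
    (sum_one_div_abs_pow_four_sub_le j.pos fun hj => ?_)
  obtain ⟨k, -, hk⟩ := mem_map.1 hj
  exact k.2 (PNat.coe_injective hk)

theorem one_le_abs_sq_sub_sq {j k : ℕ} (h : k ≠ j) : 1 ≤ |(k : ℝ) ^ 2 - (j : ℝ) ^ 2| := by
  have : (k : ℤ) ^ 2 - (j : ℤ) ^ 2 ≠ 0 := sub_ne_zero.2 fun h' =>
    h ((Nat.pow_left_injective two_ne_zero) (by exact_mod_cast h'))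
  exact_mod_cast Int.one_le_abs this

theorem abs_pow_four_sub_pos {j k : ℕ} (h : k ≠ j) : 0 < |(k : ℝ) ^ 4 - (j : ℝ) ^ 4| :=
  abs_pos.2 <| sub_ne_zero.2 fun h' =>
    h ((Nat.pow_left_injective four_ne_zero) (by exact_mod_cast h'))

theorem Finset.exists_pos_le {ι : Type*} (s : Finset ι) {g : ι → ℝ} (hg : ∀ i ∈ s, 0 < g i) :
    ∃ c > 0, ∀ i ∈ s, c ≤ g i := by
  classical
  induction s using Finset.induction_on with
  | empty => exact ⟨1, one_pos, by simp⟩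
  | insert i s _ ih =>
    obtain ⟨c, hc, hcs⟩ := ih fun x hx => hg x (mem_insert_of_mem hx)
    refine ⟨min (g i) c, lt_min (hg i (mem_insert_self i s)) hc, fun x hx => ?_⟩
    rcases mem_insert.1 hx with rfl | hx
    · exact min_le_left _ _
    · exact (min_le_right _ _).trans (hcs x hx)

theorem le_abs_sub_mul_mul_sub {p lam a X Y : ℝ} (hp : 0 < p) (hXY : 1 ≤ |X - Y|)
    (hlam : 2 * |lam| ≤ p * (X + Y)) (ha : 4 * |a| ≤ p ^ 2 * (X + Y)) :
    p ^ 2 / 4 * |X ^ 2 - Y ^ 2| ≤ |a - p * (X - Y) * (p * (X + Y) - lam)| := by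
  have hS : 0 ≤ X + Y := nonneg_of_mul_nonneg_right (by linarith [abs_nonneg lam]) hp
  have hfac : p * (X + Y) / 2 ≤ p * (X + Y) - lam := by linarith [le_abs_self lam]
  have hsq : |X ^ 2 - Y ^ 2| = |X - Y| * (X + Y) := by
    rw [show X ^ 2 - Y ^ 2 = (X - Y) * (X + Y) by ring, abs_mul, abs_of_nonneg hS]
  have hmain : p ^ 2 / 2 * |X ^ 2 - Y ^ 2| ≤ |p * (X - Y) * (p * (X + Y) - lam)| := by
    rw [abs_mul, abs_mul, abs_of_pos hp,
      abs_of_nonneg (show 0 ≤ p * (X + Y) - lam by linarith [mul_nonneg hp.le hS]), hsq]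
    nlinarith [mul_le_mul_of_nonneg_left hfac (mul_nonneg hp.le (abs_nonneg (X - Y)))]
  have hconst : |a| ≤ p ^ 2 / 4 * |X ^ 2 - Y ^ 2| := by
    rw [hsq]; nlinarith [mul_le_mul_of_nonneg_right hXY (mul_nonneg (sq_nonneg p) hS)]
  have := abs_sub_abs_le_abs_sub (p * (X - Y) * (p * (X + Y) - lam)) a
  rw [abs_sub_comm] at this
  linarith

noncomputable def mu (lam x : ℝ) : ℝ := -x ^ 4 * π ^ 4 + lam * x ^ 2 * π ^ 2

theorem add_mu_sub_mu (lam a x y : ℝ) :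
    a + mu lam x - mu lam y = a - π ^ 2 * (x ^ 2 - y ^ 2) * (π ^ 2 * (x ^ 2 + y ^ 2) - lam) := by
  unfold mu; ring

theorem exists_pos_mul_abs_pow_four_sub_le (lam a : ℝ)
    (ha : ∀ j k : ℕ+, a + mu lam k - mu lam j ≠ 0) :
    ∃ c > 0, ∀ j k : ℕ+, k ≠ j →
      c * |(k : ℝ) ^ 4 - (j : ℝ) ^ 4| ≤ |a + mu lam k - mu lam j| := by
  obtain ⟨n, hn⟩ := exists_nat_ge (2 * |lam| + 4 * |a|)
  have hD {j k : ℕ+} (h : k ≠ j) : 0 < |(k : ℝ) ^ 4 - (j : ℝ) ^ 4| :=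
    abs_pow_four_sub_pos (PNat.coe_injective.ne h)
  obtain ⟨c, hc, hcs⟩ :=
    ((Iic n.succPNat ×ˢ Iic n.succPNat).filter fun q => q.2 ≠ q.1).exists_pos_le
      (g := fun q => |a + mu lam q.2 - mu lam q.1| / |(q.2 : ℝ) ^ 4 - (q.1 : ℝ) ^ 4|)
      fun q hq => div_pos (abs_pos.2 (ha _ _)) (hD (mem_filter.1 hq).2)
  refine ⟨min c (π ^ 4 / 4), by positivity, fun j k hkj => ?_⟩
  by_cases hsmall : j ≤ n.succPNat ∧ k ≤ n.succPNat
  · have := hcs (j, k) (mem_filter.2 ⟨mem_product.2 ⟨mem_Iic.2 hsmall.1, mem_Iic.2 hsmall.2⟩, hkj⟩)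
    rw [le_div_iff₀ (hD hkj)] at this
    exact (mul_le_mul_of_nonneg_right (min_le_left _ _) (abs_nonneg _)).trans this
  · have hlarge : (n : ℝ) ≤ (k : ℝ) ^ 2 + (j : ℝ) ^ 2 := by
      simp only [← PNat.coe_le_coe, Nat.succPNat_coe, not_and_or, not_le] at hsmall
      have hj : (1 : ℝ) ≤ j := by exact_mod_cast j.pos
      have hk : (1 : ℝ) ≤ k := by exact_mod_cast k.pos
      rcases hsmall with h | h
      · have : (n : ℝ) ≤ j := by exact_mod_cast (Nat.lt_of_succ_lt h).le
        nlinarith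
      · have : (n : ℝ) ≤ k := by exact_mod_cast (Nat.lt_of_succ_lt h).le
        nlinarith
    have hπ2 : 1 ≤ π ^ 2 := by nlinarith [pi_gt_three]
    have hπ4 : 1 ≤ (π ^ 2) ^ 2 := one_le_pow₀ hπ2
    have key := le_abs_sub_mul_mul_sub (p := π ^ 2) (lam := lam) (a := a) (by positivity)
      (one_le_abs_sq_sub_sq (PNat.coe_injective.ne hkj))
      (by nlinarith [abs_nonneg a, abs_nonneg lam]) (by nlinarith [abs_nonneg a, abs_nonneg lam])
    rw [add_mu_sub_mu]
    calc min c (π ^ 4 / 4) * |(k : ℝ) ^ 4 - (j : ℝ) ^ 4|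
        ≤ π ^ 4 / 4 * |(k : ℝ) ^ 4 - (j : ℝ) ^ 4| := by gcongr; exact min_le_right _ _
      _ ≤ _ := by convert key using 3 <;> ring

/-- With μ_j := −j⁴π⁴ + λj²π² and a ∉ 𝒩₁ := {μ_k − μ_j : j, k positive integers},
there is C > 0 such that ∑_{k≠j} 1/|a + μ_k − μ_j| ≤ C(1 + log j)/j³ for all j. -/
theorem stmt10 (lam a : ℝ)
    (ha : a ∉ {x : ℝ | ∃ j k : ℕ+,
      x = (-(k : ℝ) ^ 4 * π ^ 4 + lam * (k : ℝ) ^ 2 * π ^ 2)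
        - (-(j : ℝ) ^ 4 * π ^ 4 + lam * (j : ℝ) ^ 2 * π ^ 2)}) :
    ∃ C > (0 : ℝ), ∀ j : ℕ+,
      Summable (fun k : {k : ℕ+ // k ≠ j} =>
        1 / |a + (-((k : ℕ+) : ℝ) ^ 4 * π ^ 4 + lam * ((k : ℕ+) : ℝ) ^ 2 * π ^ 2)
          - (-(j : ℝ) ^ 4 * π ^ 4 + lam * (j : ℝ) ^ 2 * π ^ 2)|) ∧
      (∑' k : {k : ℕ+ // k ≠ j},
        1 / |a + (-((k : ℕ+) : ℝ) ^ 4 * π ^ 4 + lam * ((k : ℕ+) : ℝ) ^ 2 * π ^ 2)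
          - (-(j : ℝ) ^ 4 * π ^ 4 + lam * (j : ℝ) ^ 2 * π ^ 2)|)
        ≤ C * (1 + Real.log (j : ℝ)) / (j : ℝ) ^ 3 := by
  obtain ⟨c, hc, hcf⟩ := exists_pos_mul_abs_pow_four_sub_le lam a fun j k h =>
    ha ⟨k, j, by unfold mu at h; linarith⟩
  refine ⟨3 / c, by positivity, fun j => ?_⟩
  have hbound (u : Finset {k : ℕ+ // k ≠ j}) :
      ∑ k ∈ u, 1 / |a + mu lam k.1 - mu lam j| ≤ 3 / c * (1 + log j) / j ^ 3 :=
    calc ∑ k ∈ u, 1 / |a + mu lam k.1 - mu lam j|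
        ≤ ∑ k ∈ u, 1 / c * (1 / |((k.1 : ℕ) : ℝ) ^ 4 - (j : ℝ) ^ 4|) := by
          refine sum_le_sum fun k _ => ?_
          have := abs_pow_four_sub_pos (PNat.coe_injective.ne k.2)
          rw [one_div_mul_one_div]
          exact one_div_le_one_div_of_le (by positivity) (hcf j k.1 k.2)
      _ ≤ 1 / c * (3 * (1 + log j) / j ^ 3) := by
          rw [← mul_sum]; gcongr; exact sum_one_div_abs_pow_four_sub_le_of_pnat j u
      _ = 3 / c * (1 + log j) / j ^ 3 := by ring
  exact ⟨summable_of_sum_le (fun _ => by positivity) hbound,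
    Real.tsum_le_of_sum_le (fun _ => by positivity) hbound⟩
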